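/- arXiv:math/0610332 — 4 statements merged into one kernel-verified Lean document; each statement's English description precedes it below -/
import Mathlib

section
/- Let f : G → G be a continuous map of a finite graph sending vertices to vertices. If v is a vertex of G, then f(v) need not be fixed, but if f sends every vertex to a fixed point of f, then for every edge path σ in G, the endpoints of the tightened images f_#^j(σ) are the same for all j ≥ 1; consequently, if f is a homotopy equivalence and f_#^k(σ) is a single point for some k ≥ 1, then f_#(σ) is already a single point. -/
/-!
Once `f x` is a fixed point, every iterate `f^[j]` with `j ≥ 1` sends `x` to `f x`. A homotopy
equivalence induces an equivalence of fundamental groupoids, hence is injective on homotopy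
classes of paths rel endpoints, and so are its iterates. Since `f^[k]_# σ = f^[k-1]_# (f_# σ)`
and `f^[k-1]` maps the constant path at `f x` to the constant path at `f^[k] x`, injectivity of
`f^[k-1]_#` forces `f_# σ` to be trivial as soon as `f^[k]_# σ` is.
-/

open Function
open scoped ContinuousMap

theorem Function.iterate_apply_eq_of_isFixedPt {α : Type*} {f : α → α} {x : α}
    (hx : IsFixedPt f (f x)) {j : ℕ} (hj : 1 ≤ j) : f^[j] x = f x := by
  obtain ⟨m, rfl⟩ := Nat.exists_eq_add_of_le' hj
  rw [iterate_succ_apply, (hx.iterate m).eq]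

namespace Path.Homotopic

variable {X : Type*} [TopologicalSpace X] {a b : X}

theorem of_map_homotopyEquiv {Y : Type*} [TopologicalSpace Y] (e : X ≃ₕ Y) {p q : Path a b}
    (h : (p.map e.toFun.continuous).Homotopic (q.map e.toFun.continuous)) :
    p.Homotopic q :=
  Quotient.eq.mp <| (FundamentalGroupoidFunctor.equivOfHomotopyEquiv e).functor.map_injective
    (X := ⟨a⟩) (Y := ⟨b⟩) (a₁ := .mk p) (a₂ := .mk q) (Quotient.eq.mpr h)

theorem of_map_iterate_homotopyEquiv (e : X ≃ₕ X) (m : ℕ) {p q : Path a b}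
    (h : (p.map (e.toFun.continuous.iterate m)).Homotopic
      (q.map (e.toFun.continuous.iterate m))) :
    p.Homotopic q := by
  induction m generalizing a b with
  | zero => simpa using h
  | succ m ih => exact of_map_homotopyEquiv e (ih h)

end Path.Homotopic

/-- Let `f : X → X` be a (continuous realisation of a) homotopy equivalence sending
the endpoints `x, y` of a path `σ` to fixed points of `f`.  Then the endpoints of the
iterated images `f^j ∘ σ` are the same for all `j ≥ 1`; and if for some `k ≥ 1` the
path `f^[k] ∘ σ` is trivial (homotopic rel endpoints to a constant path), then
`f ∘ σ` is already trivial. -/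
theorem stmt2 {X : Type} [TopologicalSpace X] (f : X → X) (hf : Continuous f)
    (e : ContinuousMap.HomotopyEquiv X X) (he : ∀ z : X, e.toFun z = f z)
    (x y : X) (σ : Path x y)
    (hx : f (f x) = f x) (hy : f (f y) = f y) :
    (∀ j : ℕ, 1 ≤ j → f^[j] x = f x ∧ f^[j] y = f y) ∧
    (∀ k : ℕ, 1 ≤ k → ∀ hk : f^[k] x = f^[k] y,
      (σ.map (hf.iterate k)).Homotopic ((Path.refl (f^[k] x)).cast rfl hk.symm) →
      ∃ h1 : f x = f y,
        (σ.map hf).Homotopic ((Path.refl (f x)).cast rfl h1.symm)) := by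
  have hfix (j : ℕ) (hj : 1 ≤ j) : f^[j] x = f x ∧ f^[j] y = f y :=
    ⟨iterate_apply_eq_of_isFixedPt hx hj, iterate_apply_eq_of_isFixedPt hy hj⟩
  refine ⟨hfix, fun k hk hxy h => ⟨(hfix k hk).1.symm.trans (hxy.trans (hfix k hk).2), ?_⟩⟩
  obtain rfl : ⇑e.toFun = f := funext he
  obtain ⟨m, rfl⟩ := Nat.exists_eq_add_of_le' hk
  -- `f^[m + 1]` unfolds to `f^[m] ∘ f`, so `h` is literally the hypothesis of injectivity of
  -- `f^[m]_#` applied to `f_# σ` and the constant path at `f x`.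
  exact Path.Homotopic.of_map_iterate_homotopyEquiv e m h
end

section
/- Let Γ = F ⋊_φ ℤ, where F is free with basis B and t is the stable letter. In any t-complete bracketing of a word w that represents the identity in Γ, the content of each bracket is equal in Γ to an element of F. -/
/-!
The projection `Γ → ℤ` sends a word to its total `t`-exponent, and `F` is its kernel, so it
suffices that the `t`-letters inside a bracket have exponent sum zero. By compatibility and
uniqueness of brackets, every `t`-letter inside a bracket `β` is a sentinel of a bracket nested
in `β`; hence these letters are partitioned into the sentinel pairs of the brackets nested
in `β`, and each pair `t, t⁻¹` contributes `0`.
-/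

open Finset

section Bracketing

variable {f : ℕ → ℤ} {S : Finset (ℕ × ℕ)}

theorem nested_of_sentinel_mem_Icc
    (hle : ∀ γ ∈ S, γ.1 ≤ γ.2)
    (hcompat : ∀ β ∈ S, ∀ β' ∈ S, β ≠ β' →
      β'.2 < β.1 ∨ β.2 < β'.1 ∨ (β.1 ≤ β'.1 ∧ β'.2 ≤ β.2) ∨ (β'.1 ≤ β.1 ∧ β.2 ≤ β'.2))
    (hcover : ∀ k, f k ≠ 0 → ∃! γ : ℕ × ℕ, γ ∈ S ∧ (γ.1 = k ∨ γ.2 = k))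
    {β γ : ℕ × ℕ} (hβ : β ∈ S) (hγ : γ ∈ S) {k : ℕ} (hk : γ.1 = k ∨ γ.2 = k) (hfk : f k ≠ 0)
    (hkβ : k ∈ Icc β.1 β.2) :
    β.1 ≤ γ.1 ∧ γ.2 ≤ β.2 := by
  rw [mem_Icc] at hkβ
  obtain rfl | hne := eq_or_ne γ β
  · exact ⟨le_rfl, le_rfl⟩
  have hγle := hle γ hγ
  rcases hcompat β hβ γ hγ hne.symm with h | h | h | h
  · omega
  · omega
  · exact h
  · -- `β` is nested in `γ`, so `k` is also a sentinel of `β`, and uniqueness forces `β = γ`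
    have hkβ' : β.1 = k ∨ β.2 = k := by omega
    exact absurd ((hcover k hfk).unique ⟨hγ, hk⟩ ⟨hβ, hkβ'⟩) hne

theorem sum_Icc_eq_zero_of_bracketing
    (hle : ∀ γ ∈ S, γ.1 ≤ γ.2)
    (hcompat : ∀ β ∈ S, ∀ β' ∈ S, β ≠ β' →
      β'.2 < β.1 ∨ β.2 < β'.1 ∨ (β.1 ≤ β'.1 ∧ β'.2 ≤ β.2) ∨ (β'.1 ≤ β.1 ∧ β.2 ≤ β'.2))
    (hsent : ∀ γ ∈ S, f γ.1 + f γ.2 = 0 ∧ f γ.1 ≠ 0)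
    (hcover : ∀ k, f k ≠ 0 → ∃! γ : ℕ × ℕ, γ ∈ S ∧ (γ.1 = k ∨ γ.2 = k))
    {β : ℕ × ℕ} (hβ : β ∈ S) :
    ∑ k ∈ Icc β.1 β.2, f k = 0 := by
  set inner := S.filter fun γ => β.1 ≤ γ.1 ∧ γ.2 ≤ β.2
  have hf2 : ∀ γ ∈ S, f γ.2 ≠ 0 := fun γ hγ => by have := hsent γ hγ; omega
  have hne : ∀ γ ∈ S, γ.1 ≠ γ.2 := fun γ hγ h => by have := hsent γ hγ; rw [h] at this; omega
  have hsub : inner.biUnion (fun γ => {γ.1, γ.2}) ⊆ Icc β.1 β.2 := by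
    intro k hk
    simp only [inner, mem_biUnion, mem_filter, mem_insert, mem_singleton] at hk
    obtain ⟨γ, ⟨hγ, h1, h2⟩, hk⟩ := hk
    have := hle γ hγ
    rw [mem_Icc]
    omega
  have hdisj : (inner : Set (ℕ × ℕ)).PairwiseDisjoint (fun γ => ({γ.1, γ.2} : Finset ℕ)) := by
    intro γ hγ γ' hγ' hne
    simp only [coe_filter, Set.mem_ofPred_eq, inner] at hγ hγ'
    refine Finset.disjoint_left.2 fun k hk hk' => hne ?_
    simp only [mem_insert, mem_singleton] at hk hk'
    have hfk : f k ≠ 0 := by rcases hk with rfl | rfl; exacts [(hsent γ hγ.1).2, hf2 γ hγ.1]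
    exact (hcover k hfk).unique ⟨hγ.1, by tauto⟩ ⟨hγ'.1, by tauto⟩
  calc ∑ k ∈ Icc β.1 β.2, f k
      = ∑ k ∈ inner.biUnion (fun γ => {γ.1, γ.2}), f k := by
        refine (sum_subset hsub fun k hk hk' => ?_).symm
        by_contra hfk
        obtain ⟨γ, ⟨hγ, hkγ⟩, -⟩ := hcover k hfk
        refine hk' (mem_biUnion.2 ⟨γ, mem_filter.2 ⟨hγ, ?_⟩, ?_⟩)
        · exact nested_of_sentinel_mem_Icc hle hcompat hcover hβ hγ hkγ hfk hk
        · rcases hkγ with rfl | rfl <;> simp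
    _ = ∑ γ ∈ inner, (f γ.1 + f γ.2) := by
        rw [sum_biUnion hdisj]
        exact sum_congr rfl fun γ hγ => sum_pair (hne γ (mem_filter.1 hγ).1)
    _ = 0 := sum_eq_zero fun γ hγ => (hsent γ (mem_filter.1 hγ).1).1

end Bracketing

theorem List.sum_map_take_drop {α M : Type*} [AddCommMonoid M] (e : α → M) (l : List α)
    (a n : ℕ) :
    (((l.drop a).take n).map e).sum = ∑ k ∈ Finset.Ico a (a + n), (l[k]?.map e).getD 0 := by
  induction n with
  | zero => simp
  | succ n ih =>
    rw [List.take_add_one, List.map_append, List.sum_append, ih, ← add_assoc,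
      sum_Ico_succ_top (Nat.le_add_right a n), List.getElem?_drop]
    cases l[a + n]? <;> simp

def stableLetterExp {B : Type*} : (B ⊕ Unit) × Bool → ℤ
  | (.inl _, _) => 0
  | (.inr _, true) => 1
  | (.inr _, false) => -1

theorem SemidirectProduct.rightHom_lift_mk {B N : Type*} [Group N]
    {ψ : Multiplicative ℤ →* MulAut N} (f : B → N) (l : List ((B ⊕ Unit) × Bool)) :
    rightHom (FreeGroup.lift (Sum.elim (fun b => (inl (f b) : N ⋊[ψ] Multiplicative ℤ))
      fun _ => inr (Multiplicative.ofAdd 1)) (FreeGroup.mk l)) =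
      Multiplicative.ofAdd (l.map stableLetterExp).sum := by
  rw [FreeGroup.lift_mk, map_list_prod, List.map_map]
  induction l with
  | nil => rfl
  | cons x l ih =>
    rw [List.map_cons, List.prod_cons, ih, List.map_cons, List.sum_cons, ofAdd_add]
    congr 1
    rcases x with ⟨_ | _, _ | _⟩ <;> simp [stableLetterExp, ofAdd_neg]

theorem stmt8_general (B : Type) (φ : MulAut (FreeGroup B))
    (t : FreeGroup B ⋊[zpowersHom (MulAut (FreeGroup B)) φ] Multiplicative ℤ)
    (ht : t = SemidirectProduct.inr (Multiplicative.ofAdd 1))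
    (ev : List ((B ⊕ Unit) × Bool) →
      (FreeGroup B ⋊[zpowersHom (MulAut (FreeGroup B)) φ] Multiplicative ℤ))
    (hev : ev = fun l => FreeGroup.lift
      (Sum.elim (fun b => SemidirectProduct.inl (FreeGroup.of b)) fun _ => t)
      (FreeGroup.mk l))
    (w : List ((B ⊕ Unit) × Bool))
    (S : Finset (ℕ × ℕ))
    (hvalid : ∀ β ∈ S, β.1 ≤ β.2 ∧ β.2 < w.length)
    (hcompat : ∀ β ∈ S, ∀ β' ∈ S, β ≠ β' →
      β'.2 < β.1 ∨ β.2 < β'.1 ∨ (β.1 ≤ β'.1 ∧ β'.2 ≤ β.2) ∨ (β'.1 ≤ β.1 ∧ β.2 ≤ β'.2))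
    (hsent : ∀ β ∈ S,
      (w[β.1]? = some (Sum.inr (), true) ∧ w[β.2]? = some (Sum.inr (), false)) ∨
      (w[β.1]? = some (Sum.inr (), false) ∧ w[β.2]? = some (Sum.inr (), true)))
    (hcover : ∀ (k : ℕ) (p : (B ⊕ Unit) × Bool), w[k]? = some p → p.1 = Sum.inr () →
      ∃! β : ℕ × ℕ, β ∈ S ∧ (β.1 = k ∨ β.2 = k)) :
    ∀ β ∈ S, ∃ c : FreeGroup B,
      ev ((w.drop β.1).take (β.2 - β.1 + 1)) = SemidirectProduct.inl c := by
  intro β hβ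
  set f : ℕ → ℤ := fun k => (w[k]?.map stableLetterExp).getD 0
  have hsentf : ∀ γ ∈ S, f γ.1 + f γ.2 = 0 ∧ f γ.1 ≠ 0 := fun γ hγ => by
    rcases hsent γ hγ with ⟨h1, h2⟩ | ⟨h1, h2⟩ <;> simp [f, h1, h2, stableLetterExp]
  have hcoverf : ∀ k, f k ≠ 0 → ∃! γ : ℕ × ℕ, γ ∈ S ∧ (γ.1 = k ∨ γ.2 = k) := fun k hk => by
    obtain ⟨⟨_ | _, _⟩, hp⟩ : ∃ p, w[k]? = some p := Option.ne_none_iff_exists'.1 fun h => by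
      simp [f, h] at hk
    · simp [f, hp, stableLetterExp] at hk
    · exact hcover k _ hp rfl
  have hexp : SemidirectProduct.rightHom (ev ((w.drop β.1).take (β.2 - β.1 + 1))) = 1 := by
    have hIco : Ico β.1 (β.1 + (β.2 - β.1 + 1)) = Icc β.1 β.2 := by
      have := (hvalid β hβ).1
      ext
      simp only [mem_Ico, mem_Icc]
      omega
    rw [hev, ht, SemidirectProduct.rightHom_lift_mk, List.sum_map_take_drop, hIco,
      sum_Icc_eq_zero_of_bracketing (fun γ hγ => (hvalid γ hγ).1) hcompat hsentf hcoverf hβ]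
    rfl
  rw [← MonoidHom.mem_ker, ← SemidirectProduct.range_inl_eq_ker_rightHom] at hexp
  obtain ⟨c, hc⟩ := hexp
  exact ⟨c, hc.symm⟩

/-- In any `t`-complete bracketing of a word `w` representing the identity of
`Γ = F ⋊_φ ℤ`, the content of each bracket equals an element of `F` in `Γ`.
Letters of words are pairs in `(B ⊕ Unit) × Bool`, the letter `t` being
`(Sum.inr (), true)` and `t⁻¹` being `(Sum.inr (), false)`; a bracket is recorded by
the pair of positions of its sentinels, its content being the corresponding subword. -/
theorem stmt8 (B : Type) [Fintype B] (φ : MulAut (FreeGroup B))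
    (t : FreeGroup B ⋊[zpowersHom (MulAut (FreeGroup B)) φ] Multiplicative ℤ)
    (ht : t = SemidirectProduct.inr (Multiplicative.ofAdd 1))
    (ev : List ((B ⊕ Unit) × Bool) →
      (FreeGroup B ⋊[zpowersHom (MulAut (FreeGroup B)) φ] Multiplicative ℤ))
    (hev : ev = fun l => FreeGroup.lift
      (Sum.elim (fun b => SemidirectProduct.inl (FreeGroup.of b)) fun _ => t)
      (FreeGroup.mk l))
    (w : List ((B ⊕ Unit) × Bool)) (hw : ev w = 1)
    (S : Finset (ℕ × ℕ))
    (hvalid : ∀ β ∈ S, β.1 ≤ β.2 ∧ β.2 < w.length)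
    (hcompat : ∀ β ∈ S, ∀ β' ∈ S, β ≠ β' →
      β'.2 < β.1 ∨ β.2 < β'.1 ∨ (β.1 ≤ β'.1 ∧ β'.2 ≤ β.2) ∨ (β'.1 ≤ β.1 ∧ β.2 ≤ β'.2))
    (hsent : ∀ β ∈ S,
      (w[β.1]? = some (Sum.inr (), true) ∧ w[β.2]? = some (Sum.inr (), false)) ∨
      (w[β.1]? = some (Sum.inr (), false) ∧ w[β.2]? = some (Sum.inr (), true)))
    (hcover : ∀ (k : ℕ) (p : (B ⊕ Unit) × Bool), w[k]? = some p → p.1 = Sum.inr () →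
      ∃! β : ℕ × ℕ, β ∈ S ∧ (β.1 = k ∨ β.2 = k)) :
    ∀ β ∈ S, ∃ c : FreeGroup B,
      ev ((w.drop β.1).take (β.2 - β.1 + 1)) = SemidirectProduct.inl c :=
  stmt8_general B φ t ht ev hev w S hvalid hcompat hsent hcover
end

section
/- Bounded Cancellation (algebraic form): let F be a finitely generated free group with basis B and φ ∈ Aut(F). There exists a constant C (depending only on φ and B) such that for all u, v ∈ F, if the reduced product uv has no cancellation (i.e. |uv| = |u| + |v|), then the cancellation in the product φ(u)φ(v) is at most C; that is, |φ(uv)| ≥ |φ(u)| + |φ(v)| − 2C. -/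
open FreeGroup

namespace BCaux

set_option linter.unusedSectionVars false
variable {α : Type} [DecidableEq α]

/-- A word is reduced iff it is a fixed point of `reduce`. -/
def Reduced (l : List (α × Bool)) : Prop := FreeGroup.reduce l = l

lemma reduced_toWord (x : FreeGroup α) : Reduced x.toWord := FreeGroup.reduce_toWord x

lemma toWord_mk_reduced {l : List (α × Bool)} (h : Reduced l) : (FreeGroup.mk l).toWord = l := by
  rw [FreeGroup.toWord_mk]; exact h

lemma norm_toWord (x : FreeGroup α) : x.norm = x.toWord.length := rfl

lemma norm_mk_reduced {l : List (α × Bool)} (h : Reduced l) :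
    (FreeGroup.mk l).norm = l.length := by
  rw [norm_toWord, toWord_mk_reduced h]

lemma red_eq_of_length {l₁ l₂ : List (α × Bool)} (h : FreeGroup.Red l₁ l₂)
    (hl : l₂.length = l₁.length) : l₁ = l₂ :=
  (h.sublist.eq_of_length hl).symm

lemma toWord_mul_of_norm_add {x y : FreeGroup α} (h : (x*y).norm = x.norm + y.norm) :
    (x*y).toWord = x.toWord ++ y.toWord := by
  have hxy : x * y = FreeGroup.mk (x.toWord ++ y.toWord) := by
    rw [← FreeGroup.mul_mk, FreeGroup.mk_toWord, FreeGroup.mk_toWord]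
  have hred : FreeGroup.Red (x.toWord ++ y.toWord) (reduce (x.toWord ++ y.toWord)) :=
    FreeGroup.reduce.red
  have hlen : (reduce (x.toWord ++ y.toWord)).length = (x.toWord ++ y.toWord).length := by
    have : (x*y).toWord = reduce (x.toWord ++ y.toWord) := by rw [hxy, FreeGroup.toWord_mk]
    rw [← this, List.length_append, ← norm_toWord, ← norm_toWord, ← norm_toWord, h]
  rw [hxy, FreeGroup.toWord_mk, ← red_eq_of_length hred hlen]

lemma reduced_of_norm_add {x y : FreeGroup α} (h : (x*y).norm = x.norm + y.norm) :
    Reduced (x.toWord ++ y.toWord) := by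
  have := toWord_mul_of_norm_add h
  unfold Reduced
  rw [← this]
  exact FreeGroup.reduce_toWord _

lemma norm_add_of_reduced {x y : FreeGroup α} (h : Reduced (x.toWord ++ y.toWord)) :
    (x*y).norm = x.norm + y.norm := by
  have hxy : x * y = FreeGroup.mk (x.toWord ++ y.toWord) := by
    rw [← FreeGroup.mul_mk, FreeGroup.mk_toWord, FreeGroup.mk_toWord]
  rw [hxy, norm_mk_reduced h, List.length_append, norm_toWord, norm_toWord]

lemma Reduced.infix {l₁ l₂ : List (α × Bool)} (h : Reduced l₂) (hinf : l₁ <:+: l₂) :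
    Reduced l₁ := by
  obtain ⟨s, t, rfl⟩ := hinf
  have hlen : l₁.length ≤ (reduce l₁).length := by
    have h1 : (FreeGroup.mk (s ++ l₁ ++ t)).norm = s.length + l₁.length + t.length := by
      rw [norm_mk_reduced h]; simp; omega
    have h2 : (FreeGroup.mk (s ++ l₁ ++ t)).norm ≤
        s.length + (reduce l₁).length + t.length := by
      have e : FreeGroup.mk (s ++ l₁ ++ t) = FreeGroup.mk s * FreeGroup.mk l₁ * FreeGroup.mk t := by
        rw [FreeGroup.mul_mk, FreeGroup.mul_mk]
      rw [e]
      calc (FreeGroup.mk s * FreeGroup.mk l₁ * FreeGroup.mk t).norm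
          ≤ (FreeGroup.mk s * FreeGroup.mk l₁).norm + (FreeGroup.mk t).norm :=
            FreeGroup.norm_mul_le _ _
        _ ≤ (FreeGroup.mk s).norm + (FreeGroup.mk l₁).norm + (FreeGroup.mk t).norm :=
            Nat.add_le_add_right (FreeGroup.norm_mul_le _ _) _
        _ ≤ s.length + (reduce l₁).length + t.length := by
            have a1 := FreeGroup.norm_mk_le (L₁ := s)
            have a3 := FreeGroup.norm_mk_le (L₁ := t)
            have a2 : (FreeGroup.mk l₁).norm = (reduce l₁).length := by
              rw [norm_toWord, FreeGroup.toWord_mk]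
            omega
    omega
  exact (red_eq_of_length FreeGroup.reduce.red (Nat.le_antisymm
    (FreeGroup.Red.length_le FreeGroup.reduce.red) hlen)).symm

lemma step_decomp {l₁ l₂ : List (α × Bool)} (h : FreeGroup.Red.Step l₁ l₂) :
    ∃ (P S : List (α × Bool)) (x : α) (b : Bool), l₁ = P ++ (x, b) :: (x, !b) :: S := by
  cases h with
  | not => exact ⟨_, _, _, _, rfl⟩

lemma append_pattern {γ : Type*} {l₁ l₂ P S : List γ} {a a' : γ}
    (h : l₁ ++ l₂ = P ++ a :: a' :: S) :
    [a, a'] <:+: l₁ ∨ [a, a'] <:+: l₂ ∨ (l₁ = P ++ [a] ∧ l₂ = a' :: S) := by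
  rcases List.append_eq_append_iff.mp h with ⟨t, rfl, rfl⟩ | ⟨t, rfl, ht⟩
  · right; left; exact ⟨t, S, by simp⟩
  · rcases t with _ | ⟨c, t⟩
    · right; left
      refine ⟨[], S, ?_⟩
      simp at ht ⊢
      simp [← ht]
    · rcases t with _ | ⟨c', t'⟩
      · injection ht with h1 h2
        subst h1
        right; right
        exact ⟨rfl, h2.symm⟩
      · injection ht with h1 h2
        injection h2 with h2 h3
        subst h1; subst h2
        left
        exact ⟨P, t', by simp⟩


lemma not_reduced_pair (x : α) (b : Bool) : ¬ Reduced [(x,b), (x,!b)] := by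
  unfold Reduced
  simp [FreeGroup.reduce]

lemma reduced_append_cases {l₁ l₂ : List (α × Bool)} (h₁ : Reduced l₁) (h₂ : Reduced l₂)
    (h : ¬ Reduced (l₁ ++ l₂)) : ∃ (t₁ t₂ : List (α × Bool)) (x : α) (b : Bool),
      l₁ = t₁ ++ [(x, b)] ∧ l₂ = (x, !b) :: t₂ := by
  rcases Relation.ReflTransGen.cases_head (FreeGroup.reduce.red (L := l₁ ++ l₂)) with heq | hc
  · exact absurd heq.symm h
  obtain ⟨c, hc, -⟩ := hc
  obtain ⟨P, S, x, b, hPS⟩ := step_decomp hc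
  rcases append_pattern hPS with hinf | hinf | ⟨e1, e2⟩
  · exact absurd (h₁.infix hinf) (not_reduced_pair x b)
  · exact absurd (h₂.infix hinf) (not_reduced_pair x b)
  · exact ⟨P, S, x, b, e1, e2⟩

lemma inv_mk_singleton (x : α) (b : Bool) :
    (FreeGroup.mk [(x, b)])⁻¹ = FreeGroup.mk [(x, !b)] := by
  rw [FreeGroup.inv_mk]
  simp [FreeGroup.invRev]

lemma exists_cancel : ∀ (n : ℕ) (U V : FreeGroup α), U.norm = n →
    ∃ a g b : FreeGroup α, U = a * g ∧ V = g⁻¹ * b ∧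
      U.norm = a.norm + g.norm ∧ V.norm = g.norm + b.norm ∧
      Reduced (a.toWord ++ b.toWord) := by
  intro n
  induction n using Nat.strong_induction_on with
  | _ n ih =>
  intro U V hn
  by_cases hred : Reduced (U.toWord ++ V.toWord)
  · exact ⟨U, 1, V, by simp, by simp, by simp [FreeGroup.norm_one],
      by simp [FreeGroup.norm_one], hred⟩
  · obtain ⟨t₁, t₂, x, b, hU, hV⟩ :=
      reduced_append_cases (reduced_toWord U) (reduced_toWord V) hred
    have ht₁ : Reduced t₁ := (reduced_toWord U).infix (by rw [hU]; exact ⟨[], [(x,b)], by simp⟩)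
    have ht₂ : Reduced t₂ := (reduced_toWord V).infix (by rw [hV]; exact ⟨[(x,!b)], [], by simp⟩)
    have hUn : U.norm = t₁.length + 1 := by rw [norm_toWord, hU]; simp
    have hVn : V.norm = t₂.length + 1 := by rw [norm_toWord, hV]; simp
    obtain ⟨a, g', b', e1, e2, n1, n2, hr⟩ :=
      ih (FreeGroup.mk t₁).norm (by rw [norm_mk_reduced ht₁]; omega) (FreeGroup.mk t₁)
        (FreeGroup.mk t₂) rfl
    refine ⟨a, g' * FreeGroup.mk [(x,b)], b', ?_, ?_, ?_, ?_, hr⟩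
    · rw [← mul_assoc, ← e1, FreeGroup.mul_mk, ← hU, FreeGroup.mk_toWord]
    · rw [mul_inv_rev, inv_mk_singleton, mul_assoc, ← e2]
      conv_lhs => rw [← FreeGroup.mk_toWord (x := V), hV]
      rw [show ((x,!b) :: t₂ : List (α × Bool)) = [(x,!b)] ++ t₂ from rfl, ← FreeGroup.mul_mk]
    · have hle : U.norm ≤ a.norm + (g' * FreeGroup.mk [(x,b)]).norm := by
        calc U.norm = (a * (g' * FreeGroup.mk [(x,b)])).norm := by
              rw [← mul_assoc, ← e1, FreeGroup.mul_mk, ← hU, FreeGroup.mk_toWord]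
          _ ≤ _ := FreeGroup.norm_mul_le _ _
      have hgle : (g' * FreeGroup.mk [(x,b)]).norm ≤ g'.norm + 1 := by
        calc (g' * FreeGroup.mk [(x,b)]).norm ≤ g'.norm + (FreeGroup.mk [(x,b)]).norm :=
              FreeGroup.norm_mul_le _ _
          _ ≤ g'.norm + 1 := by
              have := FreeGroup.norm_mk_le (L₁ := [(x,b)])
              simp at this; omega
      have hmk : (FreeGroup.mk t₁).norm = t₁.length := norm_mk_reduced ht₁
      omega
    · have hmk₂ : (FreeGroup.mk t₂).norm = t₂.length := norm_mk_reduced ht₂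
      have hle : U.norm ≤ a.norm + (g' * FreeGroup.mk [(x,b)]).norm := by
        calc U.norm = (a * (g' * FreeGroup.mk [(x,b)])).norm := by
              rw [← mul_assoc, ← e1, FreeGroup.mul_mk, ← hU, FreeGroup.mk_toWord]
          _ ≤ _ := FreeGroup.norm_mul_le _ _
      have hgle : (g' * FreeGroup.mk [(x,b)]).norm ≤ g'.norm + 1 := by
        calc (g' * FreeGroup.mk [(x,b)]).norm ≤ g'.norm + (FreeGroup.mk [(x,b)]).norm :=
              FreeGroup.norm_mul_le _ _
          _ ≤ g'.norm + 1 := by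
              have := FreeGroup.norm_mk_le (L₁ := [(x,b)])
              simp at this; omega
      have hmk : (FreeGroup.mk t₁).norm = t₁.length := norm_mk_reduced ht₁
      omega


lemma prefix_decomp {g z : FreeGroup α} (h : g.norm + (g⁻¹ * z).norm = z.norm) :
    z.toWord = g.toWord ++ (g⁻¹ * z).toWord := by
  obtain ⟨a, c, b, e1, e2, n1, n2, hr⟩ := exists_cancel g.norm g (g⁻¹ * z) rfl
  have hz : z = a * b := by
    have h0 : g * (g⁻¹ * z) = z := by group
    rw [← h0, e2, e1]; group
  have hzn : z.norm = a.norm + b.norm := by rw [hz]; exact norm_add_of_reduced hr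
  have hc : c = 1 := FreeGroup.norm_eq_zero.mp (by omega)
  subst hc
  have ha : g = a := by rw [e1, mul_one]
  have hb : g⁻¹ * z = b := by rw [e2, inv_one, one_mul]
  rw [hb, ha, hz]
  exact toWord_mul_of_norm_add (by rw [← hz]; omega)

lemma prefix_split {γ : Type*} {p₁ s₁ p₂ s₂ : List γ} (h : p₁ ++ s₁ = p₂ ++ s₂)
    (hle : p₁.length ≤ p₂.length) : ∃ t, p₂ = p₁ ++ t ∧ s₁ = t ++ s₂ := by
  rcases List.append_eq_append_iff.mp h with ⟨t, h1, h2⟩ | ⟨t, h1, h2⟩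
  · exact ⟨t, h1, h2⟩
  · have ht : t = [] := by
      have := congrArg List.length h1
      simp at this
      exact List.length_eq_zero_iff.mp (by omega)
    subst ht
    exact ⟨[], by simp [h1], by simp [h2]⟩

lemma interval_cases₀ (g y z : FreeGroup α)
    (h : g.norm + (g⁻¹ * z).norm = z.norm) :
    (g.norm + (g⁻¹ * y).norm = y.norm) ∨
    ((y⁻¹ * g).norm + (g⁻¹ * z).norm = (y⁻¹ * z).norm) := by
  obtain ⟨a, c, b, e1, e2, n1, n2, hr⟩ := exists_cancel (y⁻¹).norm y⁻¹ z rfl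
  set m := c⁻¹ with hm
  have hy : y = m * a⁻¹ := by
    have : y = (y⁻¹)⁻¹ := by group
    rw [this, e1]; rw [hm]; group
  have hyz : y⁻¹ * z = a * b := by rw [e1, e2, hm]; group
  have hyzn : (y⁻¹ * z).norm = a.norm + b.norm := by rw [hyz]; exact norm_add_of_reduced hr
  have hyn : y.norm = m.norm + (a⁻¹).norm := by
    rw [← FreeGroup.norm_inv_eq (x := y), n1, hm, FreeGroup.norm_inv_eq, FreeGroup.norm_inv_eq]
    omega
  have hzn : z.norm = m.norm + b.norm := by
    rw [n2, hm, FreeGroup.norm_inv_eq]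
  have hzw : z.toWord = m.toWord ++ b.toWord := by
    have ez : z = m * b := by rw [e2, hm]
    rw [ez]; exact toWord_mul_of_norm_add (by rw [← ez]; omega)
  have hyw : y.toWord = m.toWord ++ (a⁻¹).toWord := by
    rw [hy]; exact toWord_mul_of_norm_add (by rw [← hy]; omega)
  have hgw : z.toWord = g.toWord ++ (g⁻¹*z).toWord := prefix_decomp h
  rcases le_or_gt g.norm m.norm with hle | hlt
  · -- g is a prefix of m, hence of y
    obtain ⟨t, htm, -⟩ := prefix_split (hgw.symm.trans hzw)
      (by rw [← norm_toWord, ← norm_toWord]; exact hle)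
    left
    have hyw2 : y.toWord = g.toWord ++ (t ++ (a⁻¹).toWord) := by
      rw [hyw, htm]; simp
    have hgy : g⁻¹ * y = FreeGroup.mk (t ++ (a⁻¹).toWord) := by
      have : y = g * FreeGroup.mk (t ++ (a⁻¹).toWord) := by
        conv_lhs => rw [← FreeGroup.mk_toWord (x := y), hyw2]
        rw [← FreeGroup.mul_mk, FreeGroup.mk_toWord]
      rw [this]; group
    have h1 : (g⁻¹ * y).norm ≤ t.length + (a⁻¹).norm := by
      rw [hgy]
      calc (FreeGroup.mk (t ++ (a⁻¹).toWord)).norm ≤ (t ++ (a⁻¹).toWord).length :=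
            FreeGroup.norm_mk_le
        _ = t.length + (a⁻¹).norm := by rw [List.length_append, norm_toWord]
    have h2 : y.norm = g.norm + (t.length + (a⁻¹).norm) := by
      rw [norm_toWord, hyw2]; simp [norm_toWord]
    have h3 : y.norm ≤ g.norm + (g⁻¹ * y).norm := by
      calc y.norm = (g * (g⁻¹ * y)).norm := by rw [mul_inv_cancel_left]
        _ ≤ _ := FreeGroup.norm_mul_le _ _
    omega
  · -- m is a proper prefix of g
    obtain ⟨t, htg, htb⟩ := prefix_split (hzw.symm.trans hgw)
      (by rw [← norm_toWord, ← norm_toWord]; omega)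
    right
    have hgm : g = m * FreeGroup.mk t := by
      conv_lhs => rw [← FreeGroup.mk_toWord (x := g), htg]
      rw [← FreeGroup.mul_mk, FreeGroup.mk_toWord]
    have hyg : y⁻¹ * g = FreeGroup.mk (a.toWord ++ t) := by
      rw [e1, hgm, hm, ← FreeGroup.mul_mk, FreeGroup.mk_toWord]
      group
    have hrt : Reduced (a.toWord ++ t) := by
      refine hr.infix ?_
      rw [htb]
      exact ⟨[], (g⁻¹*z).toWord, by simp⟩
    have h1 : (y⁻¹ * g).norm = a.norm + t.length := by
      rw [hyg, norm_mk_reduced hrt, List.length_append, norm_toWord]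
    have h2 : b.norm = t.length + (g⁻¹ * z).norm := by
      rw [norm_toWord, htb, List.length_append, norm_toWord]
    omega

lemma interval_cases (P x y z : FreeGroup α)
    (h : (x⁻¹*P).norm + (P⁻¹*z).norm = (x⁻¹*z).norm) :
    ((x⁻¹*P).norm + (P⁻¹*y).norm = (x⁻¹*y).norm) ∨
    ((y⁻¹*P).norm + (P⁻¹*z).norm = (y⁻¹*z).norm) := by
  have e1 : (x⁻¹*P)⁻¹ * (x⁻¹*z) = P⁻¹*z := by group
  have e2 : (x⁻¹*P)⁻¹ * (x⁻¹*y) = P⁻¹*y := by group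
  have e3 : (x⁻¹*y)⁻¹ * (x⁻¹*P) = y⁻¹*P := by group
  have e4 : (x⁻¹*y)⁻¹ * (x⁻¹*z) = y⁻¹*z := by group
  have := interval_cases₀ (x⁻¹*P) (x⁻¹*y) (x⁻¹*z) (by rw [e1]; exact h)
  rw [e1, e2, e3, e4] at this
  exact this


lemma chain_lemma (L : ℕ) : ∀ (n : ℕ) (x : ℕ → FreeGroup α) (P : FreeGroup α),
    (∀ j, j < n → ((x j)⁻¹ * x (j+1)).norm ≤ L) →
    ((x 0)⁻¹ * P).norm + (P⁻¹ * x n).norm = ((x 0)⁻¹ * x n).norm →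
    ∃ i, i ≤ n ∧ ((x i)⁻¹ * P).norm ≤ L := by
  intro n
  induction n with
  | zero =>
    intro x P hstep hP
    refine ⟨0, le_refl _, ?_⟩
    have h0 : ((x 0)⁻¹ * x 0).norm = 0 := by
      rw [inv_mul_cancel]; exact FreeGroup.norm_one
    omega
  | succ n ih =>
    intro x P hstep hP
    rcases interval_cases P (x 0) (x n) (x (n+1)) hP with h1 | h2
    · obtain ⟨i, hi, hb⟩ := ih x P (fun j hj => hstep j (Nat.lt_succ_of_lt hj)) h1
      exact ⟨i, Nat.le_succ_of_le hi, hb⟩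
    · refine ⟨n, Nat.le_succ _, ?_⟩
      have := hstep n (Nat.lt_succ_self n)
      omega

lemma lip (f : FreeGroup α →* FreeGroup α) (L : ℕ)
    (hL : ∀ x : α × Bool, (f (FreeGroup.mk [x])).norm ≤ L) :
    ∀ l : List (α × Bool), (f (FreeGroup.mk l)).norm ≤ L * l.length := by
  intro l
  induction l with
  | nil =>
    rw [← FreeGroup.one_eq_mk, _root_.map_one]
    simp [FreeGroup.norm_one]
  | cons c l ihl =>
    have hsplit : FreeGroup.mk (c :: l) = FreeGroup.mk [c] * FreeGroup.mk l := by
      rw [FreeGroup.mul_mk]; rfl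
    rw [hsplit, _root_.map_mul]
    calc (f (FreeGroup.mk [c]) * f (FreeGroup.mk l)).norm
        ≤ (f (FreeGroup.mk [c])).norm + (f (FreeGroup.mk l)).norm := FreeGroup.norm_mul_le _ _
      _ ≤ L + L * l.length := Nat.add_le_add (hL c) ihl
      _ = L * (c :: l).length := by rw [List.length_cons]; ring

lemma lip_norm (f : FreeGroup α →* FreeGroup α) (L : ℕ)
    (hL : ∀ x : α × Bool, (f (FreeGroup.mk [x])).norm ≤ L) (u : FreeGroup α) :
    (f u).norm ≤ L * u.norm := by
  have := lip f L hL u.toWord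
  rwa [FreeGroup.mk_toWord] at this

end BCaux

open BCaux in
/-- Bounded Cancellation (algebraic form): there is a constant `C` depending only on
`φ` and the basis such that whenever the product `u * v` is reduced without
cancellation (`|uv| = |u| + |v|`), the cancellation in `φ(u)φ(v)` is at most `C`:
`|φ(u)| + |φ(v)| ≤ |φ(uv)| + 2C`. -/
theorem stmt10 (B : Type) [Fintype B] [DecidableEq B] (φ : MulAut (FreeGroup B)) :
    ∃ C : ℕ, ∀ u v : FreeGroup B, (u * v).norm = u.norm + v.norm →
      (φ u).norm + (φ v).norm ≤ (φ (u * v)).norm + 2 * C := by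
  classical
  set L := Finset.univ.sup (fun b : B => (φ (FreeGroup.of b)).norm) with hLdef
  set L' := Finset.univ.sup (fun b : B => (φ.symm (FreeGroup.of b)).norm) with hL'def
  have hletter : ∀ x : B × Bool, (φ (FreeGroup.mk [x])).norm ≤ L := by
    rintro ⟨b, bv⟩
    have hsup : (φ (FreeGroup.of b)).norm ≤ L := Finset.le_sup (f := fun b : B => (φ (FreeGroup.of b)).norm) (Finset.mem_univ b)
    cases bv
    · have hmk : FreeGroup.mk [(b, false)] = (FreeGroup.of b)⁻¹ :=
        (inv_mk_singleton b true).symm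
      rw [hmk, _root_.map_inv, FreeGroup.norm_inv_eq]
      exact hsup
    · exact hsup
  have hletter' : ∀ x : B × Bool, (φ.symm (FreeGroup.mk [x])).norm ≤ L' := by
    rintro ⟨b, bv⟩
    have hsup : (φ.symm (FreeGroup.of b)).norm ≤ L' := Finset.le_sup (f := fun b : B => (φ.symm (FreeGroup.of b)).norm) (Finset.mem_univ b)
    cases bv
    · have hmk : FreeGroup.mk [(b, false)] = (FreeGroup.of b)⁻¹ :=
        (inv_mk_singleton b true).symm
      rw [hmk, _root_.map_inv, FreeGroup.norm_inv_eq]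
      exact hsup
    · exact hsup
  refine ⟨L + 2 * (L * L * L'), ?_⟩
  intro u v h
  obtain ⟨a, g, b, e1, e2, n1, n2, hr⟩ := exists_cancel (φ u).norm (φ u) (φ v) rfl
  have hUV : φ (u * v) = a * b := by rw [_root_.map_mul, e1, e2]; group
  have hUVn : (φ (u * v)).norm = a.norm + b.norm := by
    rw [hUV]; exact norm_add_of_reduced hr
  suffices hg : g.norm ≤ L + 2 * (L * L * L') by omega
  set wu := u.toWord with hwu
  set wv := v.toWord with hwv
  have hwulen : wu.length = u.norm := rfl
  have hwvlen : wv.length = v.norm := rfl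
  set x : ℕ → FreeGroup B := fun i => φ (FreeGroup.mk (wu.take i)) with hx
  set y : ℕ → FreeGroup B := fun j => φ (u * FreeGroup.mk (wv.take j)) with hy
  -- first walk
  have hstepx : ∀ j, j < u.norm → ((x j)⁻¹ * x (j+1)).norm ≤ L := by
    intro j hj
    have hjlen : j < wu.length := by omega
    obtain ⟨c, htake⟩ : ∃ c, wu.take (j+1) = wu.take j ++ [c] :=
      ⟨wu[j], by rw [List.take_succ]; simp [List.getElem?_eq_getElem hjlen]⟩
    have hx2 : (x j)⁻¹ * x (j+1) = φ (FreeGroup.mk [c]) := by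
      show (φ (FreeGroup.mk (wu.take j)))⁻¹ * φ (FreeGroup.mk (wu.take (j+1))) = _
      rw [htake, ← FreeGroup.mul_mk, _root_.map_mul, inv_mul_cancel_left]
    rw [hx2]; exact hletter c
  have hPx : ((x 0)⁻¹ * a).norm + (a⁻¹ * x u.norm).norm = ((x 0)⁻¹ * x u.norm).norm := by
    have hx0 : x 0 = 1 := by
      show φ (FreeGroup.mk (wu.take 0)) = 1
      rw [List.take_zero, ← FreeGroup.one_eq_mk, _root_.map_one]
    have hxn : x u.norm = φ u := by
      show φ (FreeGroup.mk (wu.take u.norm)) = φ u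
      rw [← hwulen, List.take_length, hwu, FreeGroup.mk_toWord]
    rw [hx0, hxn, inv_one, one_mul, one_mul]
    have hag : a⁻¹ * φ u = g := by rw [e1]; group
    rw [hag]
    exact n1.symm
  obtain ⟨i, hile, hinear⟩ := chain_lemma L u.norm x a hstepx hPx
  -- second walk
  have hstepy : ∀ j, j < v.norm → ((y j)⁻¹ * y (j+1)).norm ≤ L := by
    intro j hj
    have hjlen : j < wv.length := by omega
    obtain ⟨c, htake⟩ : ∃ c, wv.take (j+1) = wv.take j ++ [c] :=
      ⟨wv[j], by rw [List.take_succ]; simp [List.getElem?_eq_getElem hjlen]⟩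
    have hy2 : (y j)⁻¹ * y (j+1) = φ (FreeGroup.mk [c]) := by
      show (φ (u * FreeGroup.mk (wv.take j)))⁻¹ * φ (u * FreeGroup.mk (wv.take (j+1))) = _
      rw [htake, ← FreeGroup.mul_mk, ← _root_.map_inv, ← _root_.map_mul]
      congr 1
      group
    rw [hy2]; exact hletter c
  have hPy : ((y 0)⁻¹ * a).norm + (a⁻¹ * y v.norm).norm = ((y 0)⁻¹ * y v.norm).norm := by
    have hy0 : y 0 = φ u := by
      show φ (u * FreeGroup.mk (wv.take 0)) = φ u
      rw [List.take_zero, ← FreeGroup.one_eq_mk, mul_one]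
    have hyn : y v.norm = φ (u * v) := by
      show φ (u * FreeGroup.mk (wv.take v.norm)) = φ (u * v)
      rw [← hwvlen, List.take_length, hwv, FreeGroup.mk_toWord]
    rw [hy0, hyn]
    have h1 : (φ u)⁻¹ * a = g⁻¹ := by rw [e1]; group
    have h2 : a⁻¹ * φ (u * v) = b := by rw [hUV]; group
    have h3 : (φ u)⁻¹ * φ (u * v) = φ v := by
      rw [← _root_.map_inv, ← _root_.map_mul]
      congr 1
      group
    rw [h1, h2, h3, FreeGroup.norm_inv_eq]
    exact n2.symm
  obtain ⟨j, hjle, hjnear⟩ := chain_lemma L v.norm y a hstepy hPy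
  -- the element q
  have hq : (FreeGroup.mk (wu.take i))⁻¹ * (u * FreeGroup.mk (wv.take j)) =
      FreeGroup.mk (wu.drop i ++ wv.take j) := by
    have hu : u = FreeGroup.mk (wu.take i) * FreeGroup.mk (wu.drop i) := by
      rw [FreeGroup.mul_mk, List.take_append_drop, hwu, FreeGroup.mk_toWord]
    rw [← FreeGroup.mul_mk]
    conv_lhs => rw [hu]
    group
  have hrq : Reduced (wu.drop i ++ wv.take j) := by
    refine (reduced_of_norm_add h).infix ?_
    refine ⟨wu.take i, wv.drop j, ?_⟩
    rw [← hwu, ← hwv]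
    conv_rhs => rw [← List.take_append_drop i wu, ← List.take_append_drop j wv]
    simp only [List.append_assoc]
  have hqn : ((FreeGroup.mk (wu.take i))⁻¹ * (u * FreeGroup.mk (wv.take j))).norm =
      (wu.drop i).length + (wv.take j).length := by
    rw [hq, norm_mk_reduced hrq, List.length_append]
  -- bound the image of q
  have hφq : (φ ((FreeGroup.mk (wu.take i))⁻¹ * (u * FreeGroup.mk (wv.take j)))).norm ≤ L + L := by
    have hsplit : φ ((FreeGroup.mk (wu.take i))⁻¹ * (u * FreeGroup.mk (wv.take j))) =
        ((x i)⁻¹ * a) * ((y j)⁻¹ * a)⁻¹ := by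
      show φ ((FreeGroup.mk (wu.take i))⁻¹ * (u * FreeGroup.mk (wv.take j))) =
        ((φ (FreeGroup.mk (wu.take i)))⁻¹ * a) * ((φ (u * FreeGroup.mk (wv.take j)))⁻¹ * a)⁻¹
      rw [_root_.map_mul, _root_.map_inv, _root_.map_mul]
      group
    rw [hsplit]
    calc (((x i)⁻¹ * a) * ((y j)⁻¹ * a)⁻¹).norm
        ≤ ((x i)⁻¹ * a).norm + (((y j)⁻¹ * a)⁻¹).norm := FreeGroup.norm_mul_le _ _
      _ ≤ L + L := by rw [FreeGroup.norm_inv_eq]; exact Nat.add_le_add hinear hjnear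
  -- co-Lipschitz bound
  have hco : (wu.drop i).length + (wv.take j).length ≤ L' * (L + L) := by
    rw [← hqn]
    calc ((FreeGroup.mk (wu.take i))⁻¹ * (u * FreeGroup.mk (wv.take j))).norm
        = (φ.symm.toMonoidHom (φ ((FreeGroup.mk (wu.take i))⁻¹ *
            (u * FreeGroup.mk (wv.take j))))).norm := by
          rw [MulEquiv.coe_toMonoidHom, MulEquiv.symm_apply_apply]
      _ ≤ L' * (φ ((FreeGroup.mk (wu.take i))⁻¹ * (u * FreeGroup.mk (wv.take j)))).norm :=
          lip_norm φ.symm.toMonoidHom L' hletter' _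
      _ ≤ L' * (L + L) := Nat.mul_le_mul_left _ hφq
  -- conclude
  have hdrop : Reduced (wu.drop i) := hrq.infix ⟨[], wv.take j, by simp⟩
  have hgb : g.norm ≤ L * (wu.drop i).length + L := by
    have hgeq : g⁻¹ = (φ u)⁻¹ * x i * ((x i)⁻¹ * a) := by
      rw [e1]; group
    have hfirst : ((φ u)⁻¹ * x i).norm ≤ L * (wu.drop i).length := by
      have heq : (φ u)⁻¹ * x i = (φ ((FreeGroup.mk (wu.take i))⁻¹ * u))⁻¹ := by
        show (φ u)⁻¹ * φ (FreeGroup.mk (wu.take i)) = (φ ((FreeGroup.mk (wu.take i))⁻¹ * u))⁻¹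
        rw [_root_.map_mul, _root_.map_inv]
        group
      have hrest : (FreeGroup.mk (wu.take i))⁻¹ * u = FreeGroup.mk (wu.drop i) := by
        have hu : u = FreeGroup.mk (wu.take i) * FreeGroup.mk (wu.drop i) := by
          rw [FreeGroup.mul_mk, List.take_append_drop, hwu, FreeGroup.mk_toWord]
        conv_lhs => rw [hu]
        group
      rw [heq, FreeGroup.norm_inv_eq, hrest]
      exact lip φ.toMonoidHom L hletter (wu.drop i)
    calc g.norm = (g⁻¹).norm := (FreeGroup.norm_inv_eq).symm
      _ = ((φ u)⁻¹ * x i * ((x i)⁻¹ * a)).norm := by rw [hgeq]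
      _ ≤ ((φ u)⁻¹ * x i).norm + ((x i)⁻¹ * a).norm := FreeGroup.norm_mul_le _ _
      _ ≤ L * (wu.drop i).length + L := Nat.add_le_add hfirst hinear
  have hdlen : (wu.drop i).length ≤ L' * (L + L) := by omega
  calc g.norm ≤ L * (wu.drop i).length + L := hgb
    _ ≤ L * (L' * (L + L)) + L := Nat.add_le_add_right (Nat.mul_le_mul_left _ hdlen) _
    _ = L + 2 * (L * L * L') := by ring
end

section
/- Let F be a finitely generated free group and φ ∈ Aut(F). Suppose there exists a constant K such that for every pair of exponents 0 ≤ i ≤ N and every w ∈ F, |φ^i(w)| ≤ K(|w| + |φ^N(w)|). Then for every conjugacy class, the same estimate holds for cyclic lengths up to a multiplicative constant: there exists K' with ‖φ^i(w)‖ ≤ K'(‖w‖ + ‖φ^N(w)‖) for all 0 ≤ i ≤ N, where ‖w‖ denotes the minimal word length among the conjugates of w. -/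
/-- The cyclic (conjugacy) length of `w`: minimal word length among conjugates of `w`. -/
noncomputable def cyclicNorm {B : Type} [DecidableEq B] (w : FreeGroup B) : ℕ :=
  sInf {n | ∃ g : FreeGroup B, n = (g * w * g⁻¹).norm}

/-!
The cyclic length is the translation length: `n ‖w‖ ≤ |wⁿ| ≤ n ‖w‖ + C_w`. The lower bound comes
from the cyclic reduction `w = c r c⁻¹`, for which `|wⁿ| = n |r| + 2 |c|`; the upper bound from
powering a shortest conjugate. Applying the based estimate to `wⁿ` and letting `n → ∞` absorbs the
additive constants, giving the cyclic estimate with `K' = K`.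
-/
open FreeGroup FreeGroup.reduceCyclically

theorem Nat.le_of_forall_mul_le_mul_add {a b C : ℕ} (h : ∀ n, n * a ≤ n * b + C) : a ≤ b := by
  by_contra! hab
  nlinarith [h (C + 1)]

namespace FreeGroup

variable {B : Type*} [DecidableEq B]

theorem norm_pow_le (x : FreeGroup B) (n : ℕ) : (x ^ n).norm ≤ n * x.norm := by
  induction n with
  | zero => simp
  | succ n ih =>
    calc (x ^ (n + 1)).norm ≤ (x ^ n).norm + x.norm := pow_succ x n ▸ norm_mul_le _ _
    _ ≤ (n + 1) * x.norm := by rw [add_one_mul]; omega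

theorem norm_conj_le (g x : FreeGroup B) : (g * x * g⁻¹).norm ≤ x.norm + 2 * g.norm := by
  have h₁ := norm_mul_le (g * x) g⁻¹
  have h₂ := norm_mul_le g x
  rw [norm_inv_eq] at h₁
  omega

end FreeGroup

variable {B : Type} [DecidableEq B]

theorem cyclicNorm_le_norm_conj (x g : FreeGroup B) : cyclicNorm x ≤ (g * x * g⁻¹).norm :=
  Nat.sInf_le ⟨g, rfl⟩

theorem exists_norm_conj_eq_cyclicNorm (x : FreeGroup B) :
    ∃ g : FreeGroup B, (g * x * g⁻¹).norm = cyclicNorm x := by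
  obtain ⟨g, hg⟩ : cyclicNorm x ∈ {n | ∃ g : FreeGroup B, n = (g * x * g⁻¹).norm} :=
    Nat.sInf_mem ⟨x.norm, 1, by simp⟩
  exact ⟨g, hg.symm⟩

theorem mul_cyclicNorm_le_norm_pow (x : FreeGroup B) (n : ℕ) :
    n * cyclicNorm x ≤ (x ^ n).norm := by
  rcases eq_or_ne n 0 with rfl | hn
  · simp
  obtain ⟨c, r, hx, hlen⟩ : ∃ c r : List (B × Bool),
      mk c * mk r * (mk c)⁻¹ = x ∧ (x ^ n).norm = 2 * c.length + n * r.length := by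
    refine ⟨conjugator x.toWord, reduceCyclically x.toWord, ?_, ?_⟩
    · rw [inv_mk, mul_mk, mul_mk, conj_conjugator_reduceCyclically, mk_toWord]
    · simp only [FreeGroup.norm, toWord_pow, reduce_flatten_replicate isReduced_toWord, hn,
        if_false, List.length_append, List.length_flatten, List.map_replicate,
        List.sum_replicate, smul_eq_mul, invRev_length]
      ring
  have hr : cyclicNorm x ≤ r.length := calc
    cyclicNorm x ≤ ((mk c)⁻¹ * x * (mk c)⁻¹⁻¹).norm := cyclicNorm_le_norm_conj _ _
    _ = (mk r).norm := by rw [← hx]; group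
    _ ≤ r.length := norm_mk_le
  calc n * cyclicNorm x ≤ n * r.length := by gcongr
  _ ≤ (x ^ n).norm := by omega

theorem exists_norm_pow_le_mul_cyclicNorm_add (x : FreeGroup B) :
    ∃ C, ∀ n : ℕ, (x ^ n).norm ≤ n * cyclicNorm x + C := by
  obtain ⟨g, hg⟩ := exists_norm_conj_eq_cyclicNorm x
  refine ⟨2 * g⁻¹.norm, fun n => ?_⟩
  have hx : x ^ n = g⁻¹ * (g * x * g⁻¹) ^ n * g⁻¹⁻¹ := by rw [conj_pow]; group
  calc (x ^ n).norm ≤ ((g * x * g⁻¹) ^ n).norm + 2 * g⁻¹.norm := hx ▸ norm_conj_le _ _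
  _ ≤ n * cyclicNorm x + 2 * g⁻¹.norm := by
    gcongr
    exact hg ▸ norm_pow_le _ n

theorem stmt11_general (B : Type) [DecidableEq B] (φ : MulAut (FreeGroup B)) (K : ℕ)
    (hK : ∀ N i : ℕ, i ≤ N → ∀ w : FreeGroup B,
      ((φ ^ i) w).norm ≤ K * (w.norm + ((φ ^ N) w).norm)) :
    ∃ K' : ℕ, ∀ N i : ℕ, i ≤ N → ∀ w : FreeGroup B,
      cyclicNorm ((φ ^ i) w) ≤ K' * (cyclicNorm w + cyclicNorm ((φ ^ N) w)) := by
  refine ⟨K, fun N i hi w => ?_⟩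
  obtain ⟨C₁, hC₁⟩ := exists_norm_pow_le_mul_cyclicNorm_add w
  obtain ⟨C₂, hC₂⟩ := exists_norm_pow_le_mul_cyclicNorm_add ((φ ^ N) w)
  refine Nat.le_of_forall_mul_le_mul_add (C := K * (C₁ + C₂)) fun n => ?_
  calc n * cyclicNorm ((φ ^ i) w) ≤ ((φ ^ i) (w ^ n)).norm :=
        map_pow (φ ^ i) w n ▸ mul_cyclicNorm_le_norm_pow _ n
  _ ≤ K * ((w ^ n).norm + ((φ ^ N) w ^ n).norm) := map_pow (φ ^ N) w n ▸ hK N i hi (w ^ n)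
  _ ≤ K * (n * cyclicNorm w + C₁ + (n * cyclicNorm ((φ ^ N) w) + C₂)) := by
    gcongr
    exacts [hC₁ n, hC₂ n]
  _ = n * (K * (cyclicNorm w + cyclicNorm ((φ ^ N) w))) + K * (C₁ + C₂) := by ring

/-- If Brinkmann's based estimate `|φ^i(w)| ≤ K(|w| + |φ^N(w)|)` holds for all
`0 ≤ i ≤ N` and all `w`, then the analogous estimate holds for cyclic lengths with
some constant `K'`. -/
theorem stmt11 (B : Type) [Fintype B] [DecidableEq B] (φ : MulAut (FreeGroup B)) (K : ℕ)
    (hK : ∀ N i : ℕ, i ≤ N → ∀ w : FreeGroup B,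
      ((φ ^ i) w).norm ≤ K * (w.norm + ((φ ^ N) w).norm)) :
    ∃ K' : ℕ, ∀ N i : ℕ, i ≤ N → ∀ w : FreeGroup B,
      cyclicNorm ((φ ^ i) w) ≤ K' * (cyclicNorm w + cyclicNorm ((φ ^ N) w)) :=
  stmt11_general B φ K hK
end
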